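/- Assume additionally that U_{q_ε} = η(ε). If z ∈ A* is such that L_H(z) ≠ L(z), then there exist u, v ∈ A* and a ∈ A with uav = z such that R(ua)(v) ≠ R(u)(av). -/

import Mathlib

/-- A monad on the category of sets, given by an endofunctor `T` with unit `pure` (η)
and multiplication `mult` (μ), satisfying functoriality, naturality and the monad laws. -/
structure SetMonad where
  T : Type → Type
  map : {X Y : Type} → (X → Y) → T X → T Y
  pure : {X : Type} → X → T X
  mult : {X : Type} → T (T X) → T X
  map_id : ∀ {X : Type} (t : T X), map id t = t
  map_comp : ∀ {X Y Z : Type} (g : Y → Z) (f : X → Y) (t : T X),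
    map (g ∘ f) t = map g (map f t)
  pure_natural : ∀ {X Y : Type} (f : X → Y) (x : X), map f (pure x) = pure (f x)
  mult_natural : ∀ {X Y : Type} (f : X → Y) (t : T (T X)),
    map f (mult t) = mult (map (map f) t)
  mult_pure : ∀ {X : Type} (t : T X), mult (pure t) = t
  mult_map_pure : ∀ {X : Type} (t : T X), mult (map pure t) = t
  mult_assoc : ∀ {X : Type} (t : T (T (T X))), mult (mult t) = mult (map mult t)

/-- An Eilenberg-Moore algebra `(carrier, str)` for the monad `M`. -/
structure AlgOver (M : SetMonad) where
  carrier : Type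
  str : M.T carrier → carrier
  str_pure : ∀ x, str (M.pure x) = x
  str_mult : ∀ t, str (M.mult t) = str (M.map str t)

/-- `f` is a `T`-algebra homomorphism from `X` to `Y`: `f ∘ h = k ∘ T f`. -/
def IsHom (M : SetMonad) (X Y : AlgOver M) (f : X.carrier → Y.carrier) : Prop :=
  ∀ t : M.T X.carrier, f (X.str t) = Y.str (M.map f t)

/-- The free `T`-algebra `(T U, μ_U)` on a set `U`. -/
def freeAlg (M : SetMonad) (U : Type) : AlgOver M where
  carrier := M.T U
  str := M.mult
  str_pure := M.mult_pure
  str_mult := M.mult_assoc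

/-- The free `T`-extension `g♯ = v ∘ T g : T U → V` of a function `g : U → V`
into a `T`-algebra `(V, v)`. -/
def extAlg (M : SetMonad) {U : Type} (V : AlgOver M) (g : U → V.carrier) :
    M.T U → V.carrier :=
  fun t => V.str (M.map g t)

/-- The pointwise `T`-algebra structure on `V^A` for a `T`-algebra `V`. -/
def powAlg (M : SetMonad) (A : Type) (V : AlgOver M) : AlgOver M where
  carrier := A → V.carrier
  str := fun t a => V.str (M.map (fun g => g a) t)
  str_pure := by
    intro x
    funext a
    show V.str (M.map (fun g => g a) (M.pure x)) = x a
    rw [M.pure_natural]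
    exact V.str_pure _
  str_mult := by
    intro t
    funext a
    show V.str (M.map (fun g => g a) (M.mult t)) =
      V.str (M.map (fun g => g a) (M.map (fun t a => V.str (M.map (fun g => g a) t)) t))
    rw [M.mult_natural, V.str_mult, ← M.map_comp, ← M.map_comp]
    rfl

/-- The residual-language map `t_L : A* → O^{A*}`, `t_L(u)(v) = L(uv)`. -/
def tLang (A : Type) {Oc : Type} (L : List A → Oc) : List A → List A → Oc :=
  fun u v => L (u ++ v)

/-- The free `T`-extension `t_L♯ : T(A*) → O^{A*}` of `t_L`. -/
def tLangS (M : SetMonad) (A : Type) (O : AlgOver M) (L : List A → O.carrier) :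
    M.T (List A) → List A → O.carrier :=
  extAlg M (powAlg M (List A) O) (tLang A L)

/-- The top part of the observation table: `row_t : S → O^E`, `row_t(s)(e) = L(se)`. -/
def rowT (A : Type) {Oc : Type} (L : List A → Oc) (S E : Set (List A)) :
    ↥S → ↥E → Oc :=
  fun s e => L (s.1 ++ e.1)

/-- The bottom part of the observation table: `row_b : S → (O^E)^A`,
`row_b(s)(a)(e) = L(sae)`. -/
def rowB (A : Type) {Oc : Type} (L : List A → Oc) (S E : Set (List A)) :
    ↥S → A → ↥E → Oc :=
  fun s a e => L (s.1 ++ a :: e.1)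

/-- The free `T`-extension `row_t♯ : T(S) → O^E`. -/
def rowTs (M : SetMonad) (A : Type) (O : AlgOver M) (L : List A → O.carrier)
    (S E : Set (List A)) : M.T ↥S → ↥E → O.carrier :=
  extAlg M (powAlg M (↥E) O) (rowT A L S E)

/-- The free `T`-extension `row_b♯ : T(S) → (O^E)^A`. -/
def rowBs (M : SetMonad) (A : Type) (O : AlgOver M) (L : List A → O.carrier)
    (S E : Set (List A)) : M.T ↥S → A → ↥E → O.carrier :=
  extAlg M (powAlg M A (powAlg M (↥E) O)) (rowB A L S E)

/-!
If no decomposition `z = uav` separated the consecutive values `R(u)(av)` and `R(ua)(v)`, they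
would telescope to `R(z)(ε) = R(ε)(z)`. The assumption `U_{q_ε} = η(ε)` makes `R(ε)(z) = L(z)`,
while `R(z)(ε)` is the `ε`-entry of the row `row_t♯(U_{q_z}) = q_z`, i.e. `L_H(z)`.
-/

theorem exists_append_cons_ne_of_ne {A X : Type} (g : List A → List A → X) {z : List A}
    (h : g z [] ≠ g [] z) :
    ∃ (u v : List A) (a : A), u ++ a :: v = z ∧ g (u ++ [a]) v ≠ g u (a :: v) := by
  induction z generalizing g with
  | nil => exact absurd rfl h
  | cons a w ih =>
    by_cases hfirst : g [a] w = g [] (a :: w)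
    · obtain ⟨u, v, b, rfl, hne⟩ := ih (fun u v => g (a :: u) v) (hfirst ▸ h)
      exact ⟨a :: u, v, b, rfl, hne⟩
    · exact ⟨[], w, a, rfl, hfirst⟩

section FreeExtension

variable {M : SetMonad}

theorem extAlg_pure {U : Type} (V : AlgOver M) (g : U → V.carrier) (x : U) :
    extAlg M V g (M.pure x) = g x := by
  rw [extAlg, M.pure_natural, V.str_pure]

theorem extAlg_map {U U' : Type} (V : AlgOver M) (g : U' → V.carrier) (f : U → U')
    (t : M.T U) : extAlg M V g (M.map f t) = extAlg M V (g ∘ f) t := by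
  rw [extAlg, extAlg, M.map_comp]

theorem extAlg_powAlg_apply {U B : Type} (V : AlgOver M) (g : U → B → V.carrier)
    (t : M.T U) (b : B) :
    extAlg M (powAlg M B V) g t b = extAlg M V (fun u => g u b) t := by
  change V.str (M.map (fun h => h b) (M.map g t)) = _
  rw [← M.map_comp]
  rfl

end FreeExtension

theorem tLangS_map_val_apply {M : SetMonad} {A : Type} (O : AlgOver M)
    (L : List A → O.carrier) {S E : Set (List A)} (U : M.T ↥S) (e : ↥E) :
    tLangS M A O L (M.map Subtype.val U) e.1 = rowTs M A O L S E U e := by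
  rw [tLangS, rowTs, extAlg_powAlg_apply, extAlg_powAlg_apply, extAlg_map]
  rfl

theorem tLangS_pure_apply {M : SetMonad} {A : Type} (O : AlgOver M)
    (L : List A → O.carrier) (u v : List A) :
    tLangS M A O L (M.pure u) v = L (u ++ v) :=
  congrFun (extAlg_pure (powAlg M (List A) O) (tLang A L) u) v

theorem stmt9_general (M : SetMonad) (A : Type) (O : AlgOver M)
    (L : List A → O.carrier) (S E : Set (List A)) (hSe : [] ∈ S) (hEe : [] ∈ E)
    -- the hypothesis automaton H on the state space img(row_t♯):
    (δH : ↥(Set.range (rowTs M A O L S E)) → A → ↥(Set.range (rowTs M A O L S E)))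
    (initH : ↥(Set.range (rowTs M A O L S E)))
    -- for each state q of H, a chosen U_q ∈ T(S) with row_t♯(U_q) = q
    (Usel : ↥(Set.range (rowTs M A O L S E)) → M.T ↥S)
    (hUsel : ∀ q, rowTs M A O L S E (Usel q) = q.1)
    (hUinit : Usel initH = M.pure (⟨[], hSe⟩ : ↥S))
    (z : List A)
    (hz : (List.foldl δH initH z).1 ⟨[], hEe⟩ ≠ L z) :
    ∃ (u v : List A) (a : A), u ++ a :: v = z ∧
      tLangS M A O L (M.map Subtype.val (Usel (List.foldl δH initH (u ++ [a])))) v ≠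
      tLangS M A O L (M.map Subtype.val (Usel (List.foldl δH initH u))) (a :: v) := by
  let R : List A → List A → O.carrier := fun u =>
    tLangS M A O L (M.map Subtype.val (Usel (List.foldl δH initH u)))
  have hR_nil : R [] z = L z := by
    simp only [R, List.foldl_nil, hUinit, M.pure_natural, tLangS_pure_apply, List.nil_append]
  have hR_apply_nil : R z [] = (List.foldl δH initH z).1 ⟨[], hEe⟩ := by
    rw [← hUsel]
    exact tLangS_map_val_apply O L _ ⟨[], hEe⟩
  exact exists_append_cons_ne_of_ne R (by rwa [hR_nil, hR_apply_nil])

/-- assuming `U_{q_ε} = η(ε)`, every counterexample `z` decomposes as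
`z = uav` with `R(ua)(v) ≠ R(u)(av)`. -/
theorem stmt9 (M : SetMonad) (A : Type) [Finite A] (O : AlgOver M)
    (L : List A → O.carrier) (S E : Set (List A)) (hSfin : S.Finite)
    (hEfin : E.Finite) (hSe : [] ∈ S) (hEe : [] ∈ E)
    -- the table over (S, E) is closed and consistent
    (hclosed : ∀ (U : M.T ↥S) (a : A), ∃ U' : M.T ↥S,
      rowTs M A O L S E U' = rowBs M A O L S E U a)
    (hcons : ∀ U₁ U₂ : M.T ↥S, rowTs M A O L S E U₁ = rowTs M A O L S E U₂ →
      rowBs M A O L S E U₁ = rowBs M A O L S E U₂)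
    -- the hypothesis automaton H on the state space img(row_t♯):
    (δH : ↥(Set.range (rowTs M A O L S E)) → A → ↥(Set.range (rowTs M A O L S E)))
    (hδH : ∀ (U : M.T ↥S) (a : A)
      (h : rowTs M A O L S E U ∈ Set.range (rowTs M A O L S E)),
      (δH ⟨rowTs M A O L S E U, h⟩ a).1 = rowBs M A O L S E U a)
    (initH : ↥(Set.range (rowTs M A O L S E)))
    (hinitH : initH.1 = rowT A L S E ⟨[], hSe⟩)
    -- for each state q of H, a chosen U_q ∈ T(S) with row_t♯(U_q) = q
    (Usel : ↥(Set.range (rowTs M A O L S E)) → M.T ↥S)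
    (hUsel : ∀ q, rowTs M A O L S E (Usel q) = q.1)
    (hUinit : Usel initH = M.pure (⟨[], hSe⟩ : ↥S))
    (z : List A)
    (hz : (List.foldl δH initH z).1 ⟨[], hEe⟩ ≠ L z) :
    ∃ (u v : List A) (a : A), u ++ a :: v = z ∧
      tLangS M A O L (M.map Subtype.val (Usel (List.foldl δH initH (u ++ [a])))) v ≠
      tLangS M A O L (M.map Subtype.val (Usel (List.foldl δH initH u))) (a :: v) :=
  stmt9_general M A O L S E hSe hEe δH initH Usel hUsel hUinit z hz
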